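/- arXiv:2210.08568 — 2 statements merged into one kernel-verified Lean document; each statement's English description precedes it below -/
import Mathlib

section
/- Let γ > 1 and let (ρ, u_x, u_y, u_z, p, E, B) be a smooth solution of the 1-D relativistic fluid equations with Lorentz-force source. Then at every point of ℝ × ℝ the following identity holds: (∂_t p + u_x ∂_x p) + (p γ/Γ)(∂_t Γ + ∂_x(Γ u_x)) = 0. -/
set_option maxHeartbeats 1000000

noncomputable section

/-- Partial derivative in `t` (first coordinate). -/
def ptd (f : ℝ × ℝ → ℝ) (z : ℝ × ℝ) : ℝ := fderiv ℝ f z (1, 0)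

/-- Partial derivative in `x` (second coordinate). -/
def pxd (f : ℝ × ℝ → ℝ) (z : ℝ × ℝ) : ℝ := fderiv ℝ f z (0, 1)

/-- Lorentz factor field. -/
def Gm3 (ux uy uz : ℝ × ℝ → ℝ) (z : ℝ × ℝ) : ℝ :=
  1 / Real.sqrt (1 - (ux z ^ 2 + uy z ^ 2 + uz z ^ 2))

/-- Specific enthalpy field. -/
def hent (γ : ℝ) (ρ p : ℝ × ℝ → ℝ) (z : ℝ × ℝ) : ℝ :=
  1 + γ / (γ - 1) * (p z / ρ z)

lemma fd_mul {f g : ℝ × ℝ → ℝ} {z v : ℝ × ℝ} (hf : DifferentiableAt ℝ f z)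
    (hg : DifferentiableAt ℝ g z) :
    fderiv ℝ (fun w => f w * g w) z v
      = f z * fderiv ℝ g z v + g z * fderiv ℝ f z v := by
  rw [fderiv_fun_mul hf hg]; simp

lemma fd_add {f g : ℝ × ℝ → ℝ} {z v : ℝ × ℝ} (hf : DifferentiableAt ℝ f z)
    (hg : DifferentiableAt ℝ g z) :
    fderiv ℝ (fun w => f w + g w) z v = fderiv ℝ f z v + fderiv ℝ g z v := by
  rw [fderiv_fun_add hf hg]; simp

lemma fd_sub {f g : ℝ × ℝ → ℝ} {z v : ℝ × ℝ} (hf : DifferentiableAt ℝ f z)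
    (hg : DifferentiableAt ℝ g z) :
    fderiv ℝ (fun w => f w - g w) z v = fderiv ℝ f z v - fderiv ℝ g z v := by
  rw [fderiv_fun_sub hf hg]; simp

lemma fd_const_mul {f : ℝ × ℝ → ℝ} {z v : ℝ × ℝ} (c : ℝ) (hf : DifferentiableAt ℝ f z) :
    fderiv ℝ (fun w => c * f w) z v = c * fderiv ℝ f z v := by
  rw [fderiv_const_mul hf c]; simp

lemma sq_hasFDerivAt {f : ℝ × ℝ → ℝ} {z : ℝ × ℝ} (hf : DifferentiableAt ℝ f z) :
    HasFDerivAt (fun w => f w ^ 2) ((2 * f z) • fderiv ℝ f z) z := by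
  have h := (hf.hasFDerivAt.mul hf.hasFDerivAt).congr_fderiv
    (show f z • fderiv ℝ f z + f z • fderiv ℝ f z = (2 * f z) • fderiv ℝ f z from
      ContinuousLinearMap.ext fun v => by simp [smul_eq_mul]; ring)
  simp only [pow_two]; exact h

lemma gm3_hasFDerivAt {ux uy uz : ℝ × ℝ → ℝ} {z : ℝ × ℝ}
    (hux : DifferentiableAt ℝ ux z) (huy : DifferentiableAt ℝ uy z)
    (huz : DifferentiableAt ℝ uz z)
    (h1 : ux z ^ 2 + uy z ^ 2 + uz z ^ 2 < 1) :
    HasFDerivAt (Gm3 ux uy uz)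
      ((Gm3 ux uy uz z ^ 3) •
        ((ux z • fderiv ℝ ux z) + (uy z • fderiv ℝ uy z) + (uz z • fderiv ℝ uz z))) z := by
  have hy : (0:ℝ) < 1 - (ux z ^ 2 + uy z ^ 2 + uz z ^ 2) := by linarith
  have hsy : 0 < Real.sqrt (1 - (ux z ^ 2 + uy z ^ 2 + uz z ^ 2)) := Real.sqrt_pos.2 hy
  have hs : HasFDerivAt (fun w => 1 - (ux w ^ 2 + uy w ^ 2 + uz w ^ 2))
      (-(((2 * ux z) • fderiv ℝ ux z) + ((2 * uy z) • fderiv ℝ uy z)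
        + ((2 * uz z) • fderiv ℝ uz z))) z := by
    refine ((hasFDerivAt_const (1:ℝ) z).sub
      (((sq_hasFDerivAt hux).add (sq_hasFDerivAt huy)).add (sq_hasFDerivAt huz))).congr_fderiv ?_
    refine ContinuousLinearMap.ext fun v => ?_
    simp
  have hφ : HasDerivAt (fun y : ℝ => (Real.sqrt y)⁻¹)
      (-(Real.sqrt (1 - (ux z ^ 2 + uy z ^ 2 + uz z ^ 2)) ^ 2)⁻¹
        * (1 / (2 * Real.sqrt (1 - (ux z ^ 2 + uy z ^ 2 + uz z ^ 2)))))
      (1 - (ux z ^ 2 + uy z ^ 2 + uz z ^ 2)) := by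
    have := (hasDerivAt_inv hsy.ne').comp _ (Real.hasDerivAt_sqrt hy.ne')
    simpa [Function.comp_def] using this
  have hinv := hφ.comp_hasFDerivAt z hs
  have hGm : Gm3 ux uy uz = fun w => (Real.sqrt (1 - (ux w ^ 2 + uy w ^ 2 + uz w ^ 2)))⁻¹ := by
    funext w; simp [Gm3, one_div]
  rw [hGm]
  have hinv' : HasFDerivAt (fun w => (Real.sqrt (1 - (ux w ^ 2 + uy w ^ 2 + uz w ^ 2)))⁻¹)
      ((-(Real.sqrt (1 - (ux z ^ 2 + uy z ^ 2 + uz z ^ 2)) ^ 2)⁻¹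
        * (1 / (2 * Real.sqrt (1 - (ux z ^ 2 + uy z ^ 2 + uz z ^ 2))))) •
        (-(((2 * ux z) • fderiv ℝ ux z) + ((2 * uy z) • fderiv ℝ uy z)
          + ((2 * uz z) • fderiv ℝ uz z)))) z := hinv
  refine hinv'.congr_fderiv ?_
  refine ContinuousLinearMap.ext fun v => ?_
  have h2 : Real.sqrt (1 - (ux z ^ 2 + uy z ^ 2 + uz z ^ 2)) ≠ 0 := hsy.ne'
  set S := Real.sqrt (1 - (ux z ^ 2 + uy z ^ 2 + uz z ^ 2)) with hS
  simp only [ContinuousLinearMap.smul_apply, ContinuousLinearMap.add_apply,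
    ContinuousLinearMap.neg_apply, smul_eq_mul, Gm3, one_div, ← hS]
  field_simp

theorem pressure_identity_lemma2
    (γ r : ℝ) (ρ ux uy uz p : ℝ × ℝ → ℝ) (E B : ℝ × ℝ → Fin 3 → ℝ)
    (hγ : 1 < γ)
    (hρpos : ∀ z, 0 < ρ z) (hppos : ∀ z, 0 < p z)
    (hu : ∀ z, ux z ^ 2 + uy z ^ 2 + uz z ^ 2 < 1)
    (hρc : ContDiff ℝ 1 ρ) (huxc : ContDiff ℝ 1 ux) (huyc : ContDiff ℝ 1 uy)
    (huzc : ContDiff ℝ 1 uz) (hpc : ContDiff ℝ 1 p)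
    (hEc : ContDiff ℝ 1 E) (hBc : ContDiff ℝ 1 B)
    (hmass : ∀ z, ptd (fun w => ρ w * Gm3 ux uy uz w) z
      + pxd (fun w => ρ w * Gm3 ux uy uz w * ux w) z = 0)
    (hmomx : ∀ z, ptd (fun w => ρ w * hent γ ρ p w * Gm3 ux uy uz w ^ 2 * ux w) z
      + pxd (fun w => ρ w * hent γ ρ p w * Gm3 ux uy uz w ^ 2 * ux w * ux w) z
      + pxd p z
      = r * ρ z * Gm3 ux uy uz z * (E z 0 + (uy z * B z 2 - uz z * B z 1)))
    (hmomy : ∀ z, ptd (fun w => ρ w * hent γ ρ p w * Gm3 ux uy uz w ^ 2 * uy w) z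
      + pxd (fun w => ρ w * hent γ ρ p w * Gm3 ux uy uz w ^ 2 * ux w * uy w) z
      = r * ρ z * Gm3 ux uy uz z * (E z 1 + (uz z * B z 0 - ux z * B z 2)))
    (hmomz : ∀ z, ptd (fun w => ρ w * hent γ ρ p w * Gm3 ux uy uz w ^ 2 * uz w) z
      + pxd (fun w => ρ w * hent γ ρ p w * Gm3 ux uy uz w ^ 2 * ux w * uz w) z
      = r * ρ z * Gm3 ux uy uz z * (E z 2 + (ux z * B z 1 - uy z * B z 0)))
    (hener : ∀ z, ptd (fun w => ρ w * hent γ ρ p w * Gm3 ux uy uz w ^ 2 - p w) z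
      + pxd (fun w => ρ w * hent γ ρ p w * Gm3 ux uy uz w ^ 2 * ux w) z
      = r * ρ z * Gm3 ux uy uz z * (ux z * E z 0 + uy z * E z 1 + uz z * E z 2)):
    ∀ z, (ptd p z + ux z * pxd p z)
      + (p z * γ / Gm3 ux uy uz z)
        * (ptd (fun w => Gm3 ux uy uz w) z + pxd (fun w => Gm3 ux uy uz w * ux w) z) = 0 := by
  intro z
  have hγ1 : γ - 1 ≠ 0 := ne_of_gt (by linarith)
  have dρ : DifferentiableAt ℝ ρ z := (hρc.differentiable one_ne_zero).differentiableAt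
  have dux : DifferentiableAt ℝ ux z := (huxc.differentiable one_ne_zero).differentiableAt
  have duy : DifferentiableAt ℝ uy z := (huyc.differentiable one_ne_zero).differentiableAt
  have duz : DifferentiableAt ℝ uz z := (huzc.differentiable one_ne_zero).differentiableAt
  have dp : DifferentiableAt ℝ p z := (hpc.differentiable one_ne_zero).differentiableAt
  have hGd := gm3_hasFDerivAt dux duy duz (hu z)
  have dG : DifferentiableAt ℝ (Gm3 ux uy uz) z := hGd.differentiableAt
  have hGder : ∀ v, fderiv ℝ (Gm3 ux uy uz) z v
      = Gm3 ux uy uz z ^ 3 * (ux z * fderiv ℝ ux z v + uy z * fderiv ℝ uy z v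
        + uz z * fderiv ℝ uz z v) := by
    intro v
    rw [hGd.fderiv]
    simp [smul_eq_mul]
    ring
  -- positivity facts for Gm3
  have hy : (0:ℝ) < 1 - (ux z ^ 2 + uy z ^ 2 + uz z ^ 2) := by have := hu z; linarith
  have hsy : 0 < Real.sqrt (1 - (ux z ^ 2 + uy z ^ 2 + uz z ^ 2)) := Real.sqrt_pos.2 hy
  have hGpos : 0 < Gm3 ux uy uz z := by
    rw [Gm3]; positivity
  have hGne : Gm3 ux uy uz z ≠ 0 := hGpos.ne'
  have hGrel : Gm3 ux uy uz z ^ 2 * (1 - (ux z ^ 2 + uy z ^ 2 + uz z ^ 2)) = 1 := by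
    rw [Gm3, one_div, inv_pow, ← Real.sq_sqrt hy.le]
    field_simp
    rw [Real.sqrt_sq hsy.le]
  -- rewrite ρ * hent
  have hFh : ∀ w, ρ w * hent γ ρ p w = ρ w + γ / (γ - 1) * p w := by
    intro w
    rw [hent]
    field_simp [(hρpos w).ne']
  simp only [hFh] at hmomx hmomy hmomz hener
  -- differentiability of composites
  have d1 : DifferentiableAt ℝ (fun w => γ / (γ - 1) * p w) z := dp.const_mul _
  have dq : DifferentiableAt ℝ (fun w => ρ w + γ / (γ - 1) * p w) z := dρ.add d1
  have dGG : DifferentiableAt ℝ (fun w => Gm3 ux uy uz w * Gm3 ux uy uz w) z := dG.mul dG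
  have dqG : DifferentiableAt ℝ
      (fun w => (ρ w + γ / (γ - 1) * p w) * (Gm3 ux uy uz w * Gm3 ux uy uz w)) z := dq.mul dGG
  have dqGx : DifferentiableAt ℝ
      (fun w => (ρ w + γ / (γ - 1) * p w) * (Gm3 ux uy uz w * Gm3 ux uy uz w) * ux w) z :=
    dqG.mul dux
  have dρG : DifferentiableAt ℝ (fun w => ρ w * Gm3 ux uy uz w) z := dρ.mul dG
  -- expand all derivatives
  have hm := hmass z
  have hx := hmomx z
  have hy2 := hmomy z
  have hz2 := hmomz z
  have he := hener z
  simp only [ptd, pxd, pow_two] at hm hx hy2 hz2 he ⊢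
  simp (disch := first | assumption | fun_prop) only [fd_mul, fd_add, fd_sub, fd_const_mul]
    at hm hx hy2 hz2 he ⊢
  simp only [hGder, fderiv_const_apply, ContinuousLinearMap.zero_apply] at hm hx hy2 hz2 he ⊢
  set X := ux z
  set Y := uy z
  set Z := uz z
  set G := Gm3 ux uy uz z
  set a := ρ z
  set P := p z
  set At := fderiv ℝ ρ z (1, 0)
  set Ax := fderiv ℝ ρ z (0, 1)
  set Pt := fderiv ℝ p z (1, 0)
  set Px := fderiv ℝ p z (0, 1)
  set Xt := fderiv ℝ ux z (1, 0)
  set Xx := fderiv ℝ ux z (0, 1)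
  set Yt := fderiv ℝ uy z (1, 0)
  set Yx := fderiv ℝ uy z (0, 1)
  set Zt := fderiv ℝ uz z (1, 0)
  set Zx := fderiv ℝ uz z (0, 1)
  linear_combination (norm := (field_simp; ring1))
    (γ - 1) * he - (γ - 1) * X * hx - (γ - 1) * Y * hy2 - (γ - 1) * Z * hz2
    - ((γ - 1) / G) * hm
    - (γ - 1) * ((At + γ / (γ - 1) * Pt) + X * (Ax + γ / (γ - 1) * Px)
        + (a + γ / (γ - 1) * P) * Xx
        + (2 * (a + γ / (γ - 1) * P) / G)
          * (G ^ 3 * (X * Xt + Y * Yt + Z * Zt) + X * (G ^ 3 * (X * Xx + Y * Yx + Z * Zx))))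
      * hGrel
end
end

section
/- Let γ > 1, N ≥ 1, Δx > 0 and r ∈ ℝ. For j ∈ ℤ/Nℤ let W_j : ℝ → ℝ⁵ be differentiable curves of primitive states (pointwise ρ_j > 0, p_j > 0, |u_j|² < 1) and E_j, B_j : ℝ → ℝ³ arbitrary functions, and suppose the conservative variables satisfy the semi-discrete scheme d/dt U(W_j(t)) = −(F̃^x(W_j(t), W_{j+1}(t)) − F̃^x(W_{j−1}(t), W_j(t)))/Δx + s(W_j(t), E_j(t), B_j(t)), where F̃^x is the entropy conservative numerical flux (logarithmic means extended by a^ln = a when the two values coincide) and s is the Lorentz-force source. Then the total entropy is conserved: d/dt ∑_{j ∈ ℤ/Nℤ} 𝒰(W_j(t)) = 0 for all t. -/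
noncomputable section

/-- Dot product on ℝ⁵. -/
def dot5 (a b : Fin 5 → ℝ) : ℝ :=
  a 0 * b 0 + a 1 * b 1 + a 2 * b 2 + a 3 * b 3 + a 4 * b 4

/-- Lorentz factor of a primitive state `W = (ρ, u_x, u_y, u_z, p)`. -/
def Gm (W : Fin 5 → ℝ) : ℝ := 1 / Real.sqrt (1 - (W 1 ^ 2 + W 2 ^ 2 + W 3 ^ 2))

/-- Specific enthalpy. -/
def enth (γ : ℝ) (W : Fin 5 → ℝ) : ℝ := 1 + γ / (γ - 1) * (W 4 / W 0)

/-- Conservative variables `U(W) = (ρΓ, ρhΓ²u_x, ρhΓ²u_y, ρhΓ²u_z, ρhΓ² − p)`. -/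
def Umap (γ : ℝ) (W : Fin 5 → ℝ) : Fin 5 → ℝ :=
  ![W 0 * Gm W,
    W 0 * enth γ W * Gm W ^ 2 * W 1,
    W 0 * enth γ W * Gm W ^ 2 * W 2,
    W 0 * enth γ W * Gm W ^ 2 * W 3,
    W 0 * enth γ W * Gm W ^ 2 - W 4]

/-- The entropy function `𝒰 = −ρΓs/(γ−1)` with `s = ln(p ρ^{−γ})`. -/
def entU (γ : ℝ) (W : Fin 5 → ℝ) : ℝ :=
  -(W 0 * Gm W * Real.log (W 4 * W 0 ^ (-γ))) / (γ - 1)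

/-- The entropy variables `V(W)`. -/
def entV (γ : ℝ) (W : Fin 5 → ℝ) : Fin 5 → ℝ :=
  ![(γ - Real.log (W 4 * W 0 ^ (-γ))) / (γ - 1) + W 0 / W 4,
    W 1 * Gm W * (W 0 / W 4),
    W 2 * Gm W * (W 0 / W 4),
    W 3 * Gm W * (W 0 / W 4),
    -(Gm W * (W 0 / W 4))]

/-- The Lorentz-force source `s(W, E, B)`. -/
def src (r : ℝ) (W : Fin 5 → ℝ) (E B : Fin 3 → ℝ) : Fin 5 → ℝ :=
  ![0,
    r * W 0 * Gm W * (E 0 + (W 2 * B 2 - W 3 * B 1)),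
    r * W 0 * Gm W * (E 1 + (W 3 * B 0 - W 1 * B 2)),
    r * W 0 * Gm W * (E 2 + (W 1 * B 1 - W 2 * B 0)),
    r * W 0 * Gm W * (W 1 * E 0 + W 2 * E 1 + W 3 * E 2)]

/-- Logarithmic mean, extended by `a^ln = a` when the two values coincide. -/
def logMean (a b : ℝ) : ℝ :=
  if a = b then a else (b - a) / (Real.log b - Real.log a)

/-- The entropy conservative numerical flux `F̃^x(W_L, W_R)`. -/
def Ffl (γ : ℝ) (WL WR : Fin 5 → ℝ) : Fin 5 → ℝ :=
  let ΓL := Gm WL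
  let ΓR := Gm WR
  let mxb := (ΓL * WL 1 + ΓR * WR 1) / 2
  let myb := (ΓL * WL 2 + ΓR * WR 2) / 2
  let mzb := (ΓL * WL 3 + ΓR * WR 3) / 2
  let Γb := (ΓL + ΓR) / 2
  let ρb := (WL 0 + WR 0) / 2
  let βb := (WL 0 / WL 4 + WR 0 / WR 4) / 2
  let ρln := logMean (WL 0) (WR 0)
  let βln := logMean (WL 0 / WL 4) (WR 0 / WR 4)
  let kcoef := 1 / ((γ - 1) * βln) + 1
  let F5 := -Γb * (kcoef * ρln * mxb + mxb * ρb / βb)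
    / (mxb ^ 2 + myb ^ 2 + mzb ^ 2 - Γb ^ 2)
  ![ρln * mxb, mxb * F5 / Γb + ρb / βb, myb * F5 / Γb, mzb * F5 / Γb, F5]

/-- The entropy potential `ψ^x = ρΓu_x`. -/
def psiX (W : Fin 5 → ℝ) : ℝ := W 0 * Gm W * W 1

/-- The numerical entropy flux
`ℱ̃ = ((V(W_L)+V(W_R))/2) · F̃^x(W_L, W_R) − (ψ^x(W_L)+ψ^x(W_R))/2`. -/
def numEntFlux (γ : ℝ) (WL WR : Fin 5 → ℝ) : ℝ :=
  dot5 (fun i => (entV γ WL i + entV γ WR i) / 2) (Ffl γ WL WR)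
    - (psiX WL + psiX WR) / 2

lemma sqrt_pos' {W : Fin 5 → ℝ} (hu : W 1 ^ 2 + W 2 ^ 2 + W 3 ^ 2 < 1) :
    0 < Real.sqrt (1 - (W 1 ^ 2 + W 2 ^ 2 + W 3 ^ 2)) :=
  Real.sqrt_pos.2 (by linarith)
lemma Gm_pos {W : Fin 5 → ℝ} (hu : W 1 ^ 2 + W 2 ^ 2 + W 3 ^ 2 < 1) : 0 < Gm W :=
  div_pos one_pos (sqrt_pos' hu)
lemma Gm_rel {W : Fin 5 → ℝ} (hu : W 1 ^ 2 + W 2 ^ 2 + W 3 ^ 2 < 1) :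
    Gm W ^ 2 * (1 - (W 1 ^ 2 + W 2 ^ 2 + W 3 ^ 2)) = 1 := by
  have h1 : (0:ℝ) < 1 - (W 1 ^ 2 + W 2 ^ 2 + W 3 ^ 2) := by linarith
  have := sqrt_pos' hu
  unfold Gm
  rw [div_pow, one_pow, Real.sq_sqrt h1.le]
  field_simp


lemma chain_scalar (g a b c d e d0 d1 d2 d3 d4 G s : ℝ)
    (hg1 : g - 1 ≠ 0) (ha : a ≠ 0) (he : e ≠ 0) (hG : G ≠ 0)
    (hrel : G ^ 2 * (1 - (b ^ 2 + c ^ 2 + d ^ 2)) = 1) :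
    -((d0 * G + a * (G ^ 3 * (b * d1 + c * d2 + d * d3))) * s + a * G * (e⁻¹ * d4 - g * (a⁻¹ * d0))) / (g - 1) =
    ((g - s) / (g - 1) + a / e) * (d0 * G + a * (G ^ 3 * (b * d1 + c * d2 + d * d3))) + b * G * (a / e) * (((d0 * (1 + g / (g - 1) * (e / a)) + a * (g / (g - 1) * ((d4 * a - e * d0) / a ^ 2))) * G ^ 2 + a * (1 + g / (g - 1) * (e / a)) * (2 * G * (G ^ 3 * (b * d1 + c * d2 + d * d3)))) * b + (a * (1 + g / (g - 1) * (e / a)) * G ^ 2) * d1) + c * G * (a / e) * (((d0 * (1 + g / (g - 1) * (e / a)) + a * (g / (g - 1) * ((d4 * a - e * d0) / a ^ 2))) * G ^ 2 + a * (1 + g / (g - 1) * (e / a)) * (2 * G * (G ^ 3 * (b * d1 + c * d2 + d * d3)))) * c + (a * (1 + g / (g - 1) * (e / a)) * G ^ 2) * d2) + d * G * (a / e) * (((d0 * (1 + g / (g - 1) * (e / a)) + a * (g / (g - 1) * ((d4 * a - e * d0) / a ^ 2))) * G ^ 2 + a * (1 + g / (g - 1) * (e / a)) * (2 * G * (G ^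 3 * (b * d1 + c * d2 + d * d3)))) * d + (a * (1 + g / (g - 1) * (e / a)) * G ^ 2) * d3) + -(G * (a / e)) * (((d0 * (1 + g / (g - 1) * (e / a)) + a * (g / (g - 1) * ((d4 * a - e * d0) / a ^ 2))) * G ^ 2 + a * (1 + g / (g - 1) * (e / a)) * (2 * G * (G ^ 3 * (b * d1 + c * d2 + d * d3)))) - d4) := by
  have hG2 : G ^ 2 ≠ 0 := pow_ne_zero _ hG
  have hq1 : b ^ 2 + c ^ 2 + d ^ 2 = 1 - 1 / G ^ 2 := by
    field_simp
    linear_combination -hrel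
  have key : (((g - s) / (g - 1) + a / e) * (d0 * G + a * (G ^ 3 * (b * d1 + c * d2 + d * d3))) + b * G * (a / e) * (((d0 * (1 + g / (g - 1) * (e / a)) + a * (g / (g - 1) * ((d4 * a - e * d0) / a ^ 2))) * G ^ 2 + a * (1 + g / (g - 1) * (e / a)) * (2 * G * (G ^ 3 * (b * d1 + c * d2 + d * d3)))) * b + (a * (1 + g / (g - 1) * (e / a)) * G ^ 2) * d1) + c * G * (a / e) * (((d0 * (1 + g / (g - 1) * (e / a)) + a * (g / (g - 1) * ((d4 * a - e * d0) / a ^ 2))) * G ^ 2 + a * (1 + g / (g - 1) * (e / a)) * (2 * G * (G ^ 3 * (b * d1 + c * d2 + d * d3)))) * c + (a * (1 + g / (g - 1) * (e / a)) * G ^ 2) * d2) + d * G * (a / e) * (((d0 * (1 + g / (g - 1) * (e / a)) + a * (g / (g - 1) * ((d4 * a - e * d0) / a ^ 2))) * G ^ 2 + a * (1 + g / (g - 1) * (e / a)) * (2 * G * (G ^ 3 * (b * d1 + c * d2 + d * d3)))) * d + (a * (1 + g / (g - 1) * (e / a)) * G ^ 2) * d3) + -(G * (a / e)) * (((d0 *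 (1 + g / (g - 1) * (e / a)) + a * (g / (g - 1) * ((d4 * a - e * d0) / a ^ 2))) * G ^ 2 + a * (1 + g / (g - 1) * (e / a)) * (2 * G * (G ^ 3 * (b * d1 + c * d2 + d * d3)))) - d4)) = -((d0 * G + a * (G ^ 3 * (b * d1 + c * d2 + d * d3))) * s + a * G * (e⁻¹ * d4 - g * (a⁻¹ * d0))) / (g - 1) := by
    calc (((g - s) / (g - 1) + a / e) * (d0 * G + a * (G ^ 3 * (b * d1 + c * d2 + d * d3))) + b * G * (a / e) * (((d0 * (1 + g / (g - 1) * (e / a)) + a * (g / (g - 1) * ((d4 * a - e * d0) / a ^ 2))) * G ^ 2 + a * (1 + g / (g - 1) * (e / a)) * (2 * G * (G ^ 3 * (b * d1 + c * d2 + d * d3)))) * b + (a * (1 + g / (g - 1) * (e / a)) * G ^ 2) * d1) + c * G * (a / e) * (((d0 * (1 + g / (g - 1) * (e / a)) + a * (g / (g - 1) * ((d4 * a - e * d0) / a ^ 2))) * G ^ 2 + a * (1 + g / (g - 1) * (e / a)) * (2 * G * (G ^ 3 * (b * d1 + c * d2 + d * d3)))) * c + (a * (1 + g / (g - 1) * (e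 / a)) * G ^ 2) * d2) + d * G * (a / e) * (((d0 * (1 + g / (g - 1) * (e / a)) + a * (g / (g - 1) * ((d4 * a - e * d0) / a ^ 2))) * G ^ 2 + a * (1 + g / (g - 1) * (e / a)) * (2 * G * (G ^ 3 * (b * d1 + c * d2 + d * d3)))) * d + (a * (1 + g / (g - 1) * (e / a)) * G ^ 2) * d3) + -(G * (a / e)) * (((d0 * (1 + g / (g - 1) * (e / a)) + a * (g / (g - 1) * ((d4 * a - e * d0) / a ^ 2))) * G ^ 2 + a * (1 + g / (g - 1) * (e / a)) * (2 * G * (G ^ 3 * (b * d1 + c * d2 + d * d3)))) - d4))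
        = ((g - s) / (g - 1) + a / e) * (d0 * G + a * (G ^ 3 * (b * d1 + c * d2 + d * d3))) + G * (a / e) * ((d0 * (1 + g / (g - 1) * (e / a)) + a * (g / (g - 1) * ((d4 * a - e * d0) / a ^ 2))) * G ^ 2 + a * (1 + g / (g - 1) * (e / a)) * (2 * G * (G ^ 3 * (b * d1 + c * d2 + d * d3)))) * (b ^ 2 + c ^ 2 + d ^ 2) + G * (a / e) * (a * (1 + g / (g - 1) * (e / a)) * G ^ 2) * (b * d1 + c * d2 + d * d3) - G * (a / e) * (((d0 * (1 + g / (g - 1) * (e / a)) + a * (g / (g - 1) * ((d4 * a - e * d0) / a ^ 2))) * G ^ 2 + a * (1 + g / (g - 1) * (e / a)) * (2 * G * (G ^ 3 * (b * d1 + c * d2 + d * d3)))) - d4) := by ring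
      _ = ((g - s) / (g - 1) + a / e) * (d0 * G + a * (G ^ 3 * (b * d1 + c * d2 + d * d3))) + G * (a / e) * ((d0 * (1 + g / (g - 1) * (e / a)) + a * (g / (g - 1) * ((d4 * a - e * d0) / a ^ 2))) * G ^ 2 + a * (1 + g / (g - 1) * (e / a)) * (2 * G * (G ^ 3 * (b * d1 + c * d2 + d * d3)))) * (1 - 1 / G ^ 2) + G * (a / e) * (a * (1 + g / (g - 1) * (e / a)) * G ^ 2) * (b * d1 + c * d2 + d * d3) - G * (a / e) * (((d0 * (1 + g / (g - 1) * (e / a)) + a * (g / (g - 1) * ((d4 * a - e * d0) / a ^ 2))) * G ^ 2 + a * (1 + g / (g - 1) * (e / a)) * (2 * G * (G ^ 3 * (b * d1 + c * d2 + d * d3)))) - d4) := by rw [hq1]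
      _ = -((d0 * G + a * (G ^ 3 * (b * d1 + c * d2 + d * d3))) * s + a * G * (e⁻¹ * d4 - g * (a⁻¹ * d0))) / (g - 1) := by field_simp; ring
  exact key.symm


lemma logMean_pos {x y : ℝ} (hx : 0 < x) (hy : 0 < y) : 0 < logMean x y := by
  unfold logMean
  split_ifs with h
  · exact hx
  · rcases lt_or_gt_of_ne h with h' | h'
    · exact div_pos (by linarith) (by simpa [sub_pos] using Real.log_lt_log hx h')
    · have := Real.log_lt_log hy h'
      apply div_pos_of_neg_of_neg <;> linarith
lemma logMean_spec {x y : ℝ} (hx : 0 < x) (hy : 0 < y) :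
    logMean x y * (Real.log y - Real.log x) = y - x := by
  unfold logMean
  split_ifs with h
  · simp [h]
  · have : Real.log y - Real.log x ≠ 0 := by
      rcases lt_or_gt_of_ne h with h' | h'
      · have := Real.log_lt_log hx h'; intro hc; linarith
      · have := Real.log_lt_log hy h'; intro hc; linarith
    field_simp

lemma lorentz_cs (a b x1 x2 x3 y1 y2 y3 : ℝ) (ha : 0 < a) (hb : 0 < b)
    (hL : a ^ 2 = 1 + (x1 ^ 2 + x2 ^ 2 + x3 ^ 2)) (hR : b ^ 2 = 1 + (y1 ^ 2 + y2 ^ 2 + y3 ^ 2)) :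
    a * b ≥ 1 + (x1 * y1 + x2 * y2 + x3 * y3) := by
  nlinarith [mul_pos ha hb, sq_nonneg (x1 - y1), sq_nonneg (x2 - y2), sq_nonneg (x3 - y3),
    sq_nonneg (x1 * y2 - x2 * y1), sq_nonneg (x1 * y3 - x3 * y1), sq_nonneg (x2 * y3 - x3 * y2),
    sq_nonneg (a * b + 1 + (x1 * y1 + x2 * y2 + x3 * y3))]

lemma den_neg (a b x1 x2 x3 y1 y2 y3 : ℝ) (ha : 0 < a) (hb : 0 < b)
    (hL : a ^ 2 = 1 + (x1 ^ 2 + x2 ^ 2 + x3 ^ 2)) (hR : b ^ 2 = 1 + (y1 ^ 2 + y2 ^ 2 + y3 ^ 2)) :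
    ((x1 + y1) / 2) ^ 2 + ((x2 + y2) / 2) ^ 2 + ((x3 + y3) / 2) ^ 2 - ((a + b) / 2) ^ 2 < 0 := by
  have := lorentz_cs a b x1 x2 x3 y1 y2 y3 ha hb hL hR
  nlinarith [this]

set_option maxHeartbeats 2000000 in
lemma flux_ec (γ : ℝ) (hγ : 1 < γ) (WL WR : Fin 5 → ℝ)
    (hρL : 0 < WL 0) (hpL : 0 < WL 4) (huL : WL 1 ^ 2 + WL 2 ^ 2 + WL 3 ^ 2 < 1)
    (hρR : 0 < WR 0) (hpR : 0 < WR 4) (huR : WR 1 ^ 2 + WR 2 ^ 2 + WR 3 ^ 2 < 1) :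
    dot5 (entV γ WR) (Ffl γ WL WR) - dot5 (entV γ WL) (Ffl γ WL WR)
      = psiX WR - psiX WL := by
  have hγ1 : γ - 1 ≠ 0 := by linarith
  have hGLpos : 0 < Gm WL := Gm_pos huL
  have hGRpos : 0 < Gm WR := Gm_pos huR
  have hrelL := Gm_rel huL
  have hrelR := Gm_rel huR
  obtain ⟨βLa, hβL⟩ : ∃ x, x = WL 0 / WL 4 := ⟨_, rfl⟩
  obtain ⟨βRa, hβR⟩ : ∃ x, x = WR 0 / WR 4 := ⟨_, rfl⟩
  obtain ⟨mxb, hmxb⟩ : ∃ x, x = (Gm WL * WL 1 + Gm WR * WR 1) / 2 := ⟨_, rfl⟩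
  obtain ⟨myb, hmyb⟩ : ∃ x, x = (Gm WL * WL 2 + Gm WR * WR 2) / 2 := ⟨_, rfl⟩
  obtain ⟨mzb, hmzb⟩ : ∃ x, x = (Gm WL * WL 3 + Gm WR * WR 3) / 2 := ⟨_, rfl⟩
  obtain ⟨Γb, hΓb⟩ : ∃ x, x = (Gm WL + Gm WR) / 2 := ⟨_, rfl⟩
  obtain ⟨ρb, hρb⟩ : ∃ x, x = (WL 0 + WR 0) / 2 := ⟨_, rfl⟩
  obtain ⟨βb, hβb⟩ : ∃ x, x = (WL 0 / WL 4 + WR 0 / WR 4) / 2 := ⟨_, rfl⟩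
  obtain ⟨ρln, hρln⟩ : ∃ x, x = logMean (WL 0) (WR 0) := ⟨_, rfl⟩
  obtain ⟨βln, hβln⟩ : ∃ x, x = logMean (WL 0 / WL 4) (WR 0 / WR 4) := ⟨_, rfl⟩
  obtain ⟨k, hk⟩ : ∃ x, x = 1 / ((γ - 1) * βln) + 1 := ⟨_, rfl⟩
  obtain ⟨X, hX⟩ : ∃ x, x = (γ - 1)⁻¹ := ⟨_, rfl⟩
  obtain ⟨F5, hF5⟩ : ∃ x, x = -Γb * (k * ρln * mxb + mxb * ρb / βb)
      / (mxb ^ 2 + myb ^ 2 + mzb ^ 2 - Γb ^ 2) := ⟨_, rfl⟩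
  obtain ⟨F2, hF2⟩ : ∃ x, x = mxb * F5 / Γb + ρb / βb := ⟨_, rfl⟩
  obtain ⟨F3, hF3⟩ : ∃ x, x = myb * F5 / Γb := ⟨_, rfl⟩
  obtain ⟨F4, hF4⟩ : ∃ x, x = mzb * F5 / Γb := ⟨_, rfl⟩
  have hβLpos : 0 < βLa := hβL ▸ div_pos hρL hpL
  have hβRpos : 0 < βRa := hβR ▸ div_pos hρR hpR
  have hβb' : βb = (βLa + βRa) / 2 := by rw [hβb, hβL, hβR]
  have hβbpos : 0 < βb := by rw [hβb']; linarith
  have hΓbpos : 0 < Γb := by rw [hΓb]; linarith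
  have hρlnpos : 0 < ρln := hρln ▸ logMean_pos hρL hρR
  have hβlnpos : 0 < βln := hβln ▸ logMean_pos (div_pos hρL hpL) (div_pos hρR hpR)
  -- denominator is negative
  have hML : (Gm WL) ^ 2 = 1 + ((Gm WL * WL 1) ^ 2 + (Gm WL * WL 2) ^ 2 + (Gm WL * WL 3) ^ 2) := by
    linear_combination hrelL
  have hMR : (Gm WR) ^ 2 = 1 + ((Gm WR * WR 1) ^ 2 + (Gm WR * WR 2) ^ 2 + (Gm WR * WR 3) ^ 2) := by
    linear_combination hrelR
  have hden : mxb ^ 2 + myb ^ 2 + mzb ^ 2 - Γb ^ 2 < 0 := by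
    rw [hmxb, hmyb, hmzb, hΓb]
    exact den_neg (Gm WL) (Gm WR) (Gm WL * WL 1) (Gm WL * WL 2) (Gm WL * WL 3)
      (Gm WR * WR 1) (Gm WR * WR 2) (Gm WR * WR 3) hGLpos hGRpos hML hMR
  -- polynomial facts
  have hlm1 : ρln * (Real.log (WR 0) - Real.log (WL 0)) = WR 0 - WL 0 := by
    rw [hρln]; exact logMean_spec hρL hρR
  have hlm2 : βln * ((Real.log (WR 0) - Real.log (WR 4)) - (Real.log (WL 0) - Real.log (WL 4)))
      = βRa - βLa := by
    rw [hβln, hβL, hβR, ← Real.log_div hρR.ne' hpR.ne', ← Real.log_div hρL.ne' hpL.ne']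
    exact logMean_spec (div_pos hρL hpL) (div_pos hρR hpR)
  have h7 : k * ((γ - 1) * βln) = 1 + (γ - 1) * βln := by rw [hk]; field_simp
  have h8 : X * (γ - 1) = 1 := by rw [hX]; field_simp
  have h9 : F5 * ((mxb ^ 2 + myb ^ 2 + mzb ^ 2 - Γb ^ 2) * βb)
      = -(Γb * (k * ρln * mxb * βb + mxb * ρb)) := by
    rw [hF5, ← mul_assoc, div_mul_cancel₀ _ hden.ne]
    field_simp
  have h10 : F2 * (Γb * βb) = mxb * F5 * βb + ρb * Γb := by
    rw [hF2]; field_simp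
  have h11 : F3 * Γb = myb * F5 := by rw [hF3]; field_simp
  have h12 : F4 * Γb = mzb * F5 := by rw [hF4]; field_simp
  have hI1 : ((γ - (Real.log (WR 4) - γ * Real.log (WR 0))) * X + βRa
      - ((γ - (Real.log (WL 4) - γ * Real.log (WL 0))) * X + βLa)) * ρln
      = (WR 0 - WL 0) + (βRa - βLa) * k * ρln := by
    linear_combination hlm1 + ((k - 1) * ρln) * hlm2
      + (ρln * (Real.log (WR 0) - Real.log (WL 0))
        + (k - 1) * βln * ((Real.log (WR 0) - Real.log (WR 4))
          - (Real.log (WL 0) - Real.log (WL 4))) * ρln) * h8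
      - X * ((Real.log (WR 0) - Real.log (WR 4))
          - (Real.log (WL 0) - Real.log (WL 4))) * ρln * h7
  -- unfold the flux
  have hFfl : Ffl γ WL WR = ![ρln * mxb, F2, F3, F4, F5] := by
    rw [hF2, hF3, hF4, hF5, hk, hmxb, hmyb, hmzb, hΓb, hρb, hβb, hρln, hβln]
    simp only [Ffl]
  have hlogL : Real.log (WL 4 * WL 0 ^ (-γ)) = Real.log (WL 4) - γ * Real.log (WL 0) := by
    rw [Real.log_mul hpL.ne' (Real.rpow_pos_of_pos hρL _).ne', Real.log_rpow hρL]; ring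
  have hlogR : Real.log (WR 4 * WR 0 ^ (-γ)) = Real.log (WR 4) - γ * Real.log (WR 0) := by
    rw [Real.log_mul hpR.ne' (Real.rpow_pos_of_pos hρR _).ne', Real.log_rpow hρR]; ring
  rw [hFfl]
  simp only [dot5, entV, psiX, Matrix.cons_val_zero, Matrix.cons_val_one, Matrix.head_cons,
    Matrix.cons_val_two, Matrix.tail_cons, Matrix.cons_val_three, Matrix.cons_val_four,
    hlogL, hlogR]
  rw [← hβL, ← hβR]
  simp only [div_eq_mul_inv]
  rw [← hX]
  -- expand the mean atoms
  rw [hmxb, hmyb, hmzb, hΓb, hρb, hβb'] at h9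
  rw [hmxb, hΓb, hρb, hβb'] at h10
  rw [hmyb, hΓb] at h11
  rw [hmzb, hΓb] at h12
  rw [hmxb]
  apply mul_left_cancel₀ (a := ((Gm WL + Gm WR) / 2) * ((βLa + βRa) / 2))
    (mul_ne_zero (by rw [← hΓb]; exact hΓbpos.ne') (by rw [← hβb']; exact hβbpos.ne'))
  linear_combination
    ((Gm WL * WL 1 + Gm WR * WR 1) / 2 * ((Gm WL + Gm WR) / 2) * ((βLa + βRa) / 2)) * hI1
    + (WR 1 * Gm WR * βRa - WL 1 * Gm WL * βLa) * h10
    + (WR 2 * Gm WR * βRa - WL 2 * Gm WL * βLa) * ((βLa + βRa) / 2) * h11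
    + (WR 3 * Gm WR * βRa - WL 3 * Gm WL * βLa) * ((βLa + βRa) / 2) * h12
    + (βRa - βLa) * h9
    + (((βLa + βRa) / 2) ^ 2 * F5 / 2) * hrelL
    - (((βLa + βRa) / 2) ^ 2 * F5 / 2) * hrelR

lemma entU_hasDerivAt (γ : ℝ) (hγ : 1 < γ) (w : ℝ → Fin 5 → ℝ)
    (hρ : ∀ t, 0 < w t 0) (hp : ∀ t, 0 < w t 4)
    (hu : ∀ t, (w t 1) ^ 2 + (w t 2) ^ 2 + (w t 3) ^ 2 < 1)
    (hdiff : Differentiable ℝ w) (t : ℝ) :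
    HasDerivAt (fun τ => entU γ (w τ))
      (dot5 (entV γ (w t)) (deriv (fun τ => Umap γ (w τ)) t)) t := by
  have hγ1 : γ - 1 ≠ 0 := by linarith
  have ha : (w t 0) ≠ 0 := (hρ t).ne'
  have he : (w t 4) ≠ 0 := (hp t).ne'
  have hGpos : 0 < Gm (w t) := Gm_pos (hu t)
  have hrel : (Gm (w t)) ^ 2 * (1 - ((w t 1) ^ 2 + (w t 2) ^ 2 + (w t 3) ^ 2)) = 1 := Gm_rel (hu t)
  have hSpos := sqrt_pos' (hu t)
  obtain ⟨δ0, hδ0⟩ : ∃ x, HasDerivAt (fun τ => w τ 0) x t :=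
    ⟨_, ((differentiable_pi.mp hdiff 0) t).hasDerivAt⟩
  obtain ⟨δ1, hδ1⟩ : ∃ x, HasDerivAt (fun τ => w τ 1) x t :=
    ⟨_, ((differentiable_pi.mp hdiff 1) t).hasDerivAt⟩
  obtain ⟨δ2, hδ2⟩ : ∃ x, HasDerivAt (fun τ => w τ 2) x t :=
    ⟨_, ((differentiable_pi.mp hdiff 2) t).hasDerivAt⟩
  obtain ⟨δ3, hδ3⟩ : ∃ x, HasDerivAt (fun τ => w τ 3) x t :=
    ⟨_, ((differentiable_pi.mp hdiff 3) t).hasDerivAt⟩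
  obtain ⟨δ4, hδ4⟩ : ∃ x, HasDerivAt (fun τ => w τ 4) x t :=
    ⟨_, ((differentiable_pi.mp hdiff 4) t).hasDerivAt⟩
  have hfne : 1 - ((w t 1) ^ 2 + (w t 2) ^ 2 + (w t 3) ^ 2) ≠ 0 := by nlinarith [hu t]
  have hq : HasDerivAt (fun τ => 1 - ((w τ 1) ^ 2 + (w τ 2) ^ 2 + (w τ 3) ^ 2))
      (0 - ((2 * (w t 1) ^ 1 * δ1 + 2 * (w t 2) ^ 1 * δ2) + 2 * (w t 3) ^ 1 * δ3)) t :=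
    (hasDerivAt_const t (1:ℝ)).sub (((hδ1.pow 2).add (hδ2.pow 2)).add (hδ3.pow 2))
  have hsq := (Real.hasDerivAt_sqrt hfne).comp t hq
  have hGm0 := (hasDerivAt_const t (1:ℝ)).div hsq hSpos.ne'
  have hG : HasDerivAt (fun τ => Gm (w τ)) ((Gm (w t)) ^ 3 * ((w t 1) * δ1 + (w t 2) * δ2 + (w t 3) * δ3)) t := by
    refine hGm0.congr_deriv ?_
    simp only [Function.comp_apply]
    have hS2 : Real.sqrt (1 - ((w t 1) ^ 2 + (w t 2) ^ 2 + (w t 3) ^ 2)) ^ 2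
        = 1 - ((w t 1) ^ 2 + (w t 2) ^ 2 + (w t 3) ^ 2) := Real.sq_sqrt (by nlinarith [hu t])
    have hGS : (Gm (w t)) = 1 / Real.sqrt (1 - ((w t 1) ^ 2 + (w t 2) ^ 2 + (w t 3) ^ 2)) := rfl
    rw [hGS]
    field_simp
    ring_nf
  have hh : HasDerivAt (fun τ => enth γ (w τ)) (γ / (γ - 1) * ((δ4 * (w t 0) - (w t 4) * δ0) / (w t 0) ^ 2)) t := by
    have : HasDerivAt (fun τ => 1 + γ / (γ - 1) * (w τ 4 / w τ 0))
        (0 + γ / (γ - 1) * ((δ4 * (w t 0) - (w t 4) * δ0) / (w t 0) ^ 2)) t :=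
      (hasDerivAt_const t (1:ℝ)).add ((hδ4.div hδ0 ha).const_mul (γ / (γ - 1)))
    exact this.congr_deriv (by ring)
  have hG2 : HasDerivAt (fun τ => Gm (w τ) ^ 2) (2 * (Gm (w t)) * ((Gm (w t)) ^ 3 * ((w t 1) * δ1 + (w t 2) * δ2 + (w t 3) * δ3))) t := by
    simpa using hG.fun_pow 2
  have hAH : HasDerivAt (fun τ => w τ 0 * enth γ (w τ)) (δ0 * (1 + γ / (γ - 1) * ((w t 4) / (w t 0))) + (w t 0) * (γ / (γ - 1) * ((δ4 * (w t 0) - (w t 4) * δ0) / (w t 0) ^ 2))) t := by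
    have := hδ0.mul hh
    exact this.congr_deriv (by rw [show enth γ (w t) = (1 + γ / (γ - 1) * ((w t 4) / (w t 0))) from rfl])
  have hAHG : HasDerivAt (fun τ => w τ 0 * enth γ (w τ) * Gm (w τ) ^ 2) ((δ0 * (1 + γ / (γ - 1) * ((w t 4) / (w t 0))) + (w t 0) * (γ / (γ - 1) * ((δ4 * (w t 0) - (w t 4) * δ0) / (w t 0) ^ 2))) * (Gm (w t)) ^ 2 + (w t 0) * (1 + γ / (γ - 1) * ((w t 4) / (w t 0))) * (2 * (Gm (w t)) * ((Gm (w t)) ^ 3 * ((w t 1) * δ1 + (w t 2) * δ2 + (w t 3) * δ3)))) t := hAH.mul hG2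
  have hU : HasDerivAt (fun τ => Umap γ (w τ)) (![(δ0 * (Gm (w t)) + (w t 0) * ((Gm (w t)) ^ 3 * ((w t 1) * δ1 + (w t 2) * δ2 + (w t 3) * δ3))), ((δ0 * (1 + γ / (γ - 1) * ((w t 4) / (w t 0))) + (w t 0) * (γ / (γ - 1) * ((δ4 * (w t 0) - (w t 4) * δ0) / (w t 0) ^ 2))) * (Gm (w t)) ^ 2 + (w t 0) * (1 + γ / (γ - 1) * ((w t 4) / (w t 0))) * (2 * (Gm (w t)) * ((Gm (w t)) ^ 3 * ((w t 1) * δ1 + (w t 2) * δ2 + (w t 3) * δ3)))) * (w t 1) + ((w t 0) * (1 + γ / (γ - 1) * ((w t 4) / (w t 0))) * (Gm (w t)) ^ 2) * δ1, ((δ0 * (1 + γ / (γ - 1) * ((w t 4) / (w t 0))) + (w t 0) * (γ / (γ - 1) * ((δ4 * (w t 0) - (w t 4) * δ0) / (w t 0) ^ 2))) * (Gm (w t)) ^ 2 + (w t 0) * (1 + γ / (γ - 1) * ((w t 4) / (w t 0))) * (2 * (Gm (w t)) * ((Gm (w t)) ^ 3 * ((w t 1) * δ1 + (w t 2) * δ2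 + (w t 3) * δ3)))) * (w t 2) + ((w t 0) * (1 + γ / (γ - 1) * ((w t 4) / (w t 0))) * (Gm (w t)) ^ 2) * δ2, ((δ0 * (1 + γ / (γ - 1) * ((w t 4) / (w t 0))) + (w t 0) * (γ / (γ - 1) * ((δ4 * (w t 0) - (w t 4) * δ0) / (w t 0) ^ 2))) * (Gm (w t)) ^ 2 + (w t 0) * (1 + γ / (γ - 1) * ((w t 4) / (w t 0))) * (2 * (Gm (w t)) * ((Gm (w t)) ^ 3 * ((w t 1) * δ1 + (w t 2) * δ2 + (w t 3) * δ3)))) * (w t 3) + ((w t 0) * (1 + γ / (γ - 1) * ((w t 4) / (w t 0))) * (Gm (w t)) ^ 2) * δ3, ((δ0 * (1 + γ / (γ - 1) * ((w t 4) / (w t 0))) + (w t 0) * (γ / (γ - 1) * ((δ4 * (w t 0) - (w t 4) * δ0) / (w t 0) ^ 2))) * (Gm (w t)) ^ 2 + (w t 0) * (1 + γ / (γ - 1) * ((w t 4) / (w t 0))) * (2 * (Gm (w t)) * ((Gm (w t)) ^ 3 * ((w t 1) * δ1 + (w t 2) * δ2 + (w t 3) * δ3)))) - δ4]) t := by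
    apply hasDerivAt_pi.2
    intro i
    fin_cases i
    · exact (hδ0.mul hG).congr_deriv rfl
    · exact (hAHG.mul hδ1).congr_deriv rfl
    · exact (hAHG.mul hδ2).congr_deriv rfl
    · exact (hAHG.mul hδ3).congr_deriv rfl
    · exact (hAHG.sub hδ4).congr_deriv rfl
  rw [hU.deriv]
  have hfun : (fun τ => entU γ (w τ))
      = fun τ => -(w τ 0 * Gm (w τ) * (Real.log (w τ 4) - γ * Real.log (w τ 0))) / (γ - 1) := by
    funext τ
    rw [entU, Real.log_mul (hp τ).ne' (Real.rpow_pos_of_pos (hρ τ) _).ne', Real.log_rpow (hρ τ)]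
    ring
  rw [hfun]
  have hle : HasDerivAt (fun τ => Real.log (w τ 4)) ((w t 4)⁻¹ * δ4) t :=
    by have := (Real.hasDerivAt_log he).comp t hδ4; exact this
  have hla : HasDerivAt (fun τ => Real.log (w τ 0)) ((w t 0)⁻¹ * δ0) t :=
    by have := (Real.hasDerivAt_log ha).comp t hδ0; exact this
  have hs : HasDerivAt (fun τ => Real.log (w τ 4) - γ * Real.log (w τ 0))
      ((w t 4)⁻¹ * δ4 - γ * ((w t 0)⁻¹ * δ0)) t := hle.sub (hla.const_mul γ)
  have hU0 : HasDerivAt (fun τ => w τ 0 * Gm (w τ)) (δ0 * (Gm (w t)) + (w t 0) * ((Gm (w t)) ^ 3 * ((w t 1) * δ1 + (w t 2) * δ2 + (w t 3) * δ3))) t := (hδ0.mul hG).congr_deriv rfl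
  have hlogpt : Real.log ((w t 4) * (w t 0) ^ (-γ)) = Real.log (w t 4) - γ * Real.log (w t 0) := by
    rw [Real.log_mul he (Real.rpow_pos_of_pos (hρ t) _).ne', Real.log_rpow (hρ t)]
    ring
  refine (((hU0.mul hs).neg).div_const (γ - 1)).congr_deriv ?_
  simp only [dot5, entV, Matrix.cons_val_zero, Matrix.cons_val_one, Matrix.head_cons,
    Matrix.cons_val_two, Matrix.tail_cons, Matrix.cons_val_three, Matrix.cons_val_four, hlogpt]
  linear_combination
    (chain_scalar γ (w t 0) (w t 1) (w t 2) (w t 3) (w t 4) δ0 δ1 δ2 δ3 δ4 (Gm (w t)) (Real.log (w t 4) - γ * Real.log (w t 0)) hγ1 ha he hGpos.ne' hrel)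

lemma dot5_src (γ r : ℝ) (W : Fin 5 → ℝ) (E B : Fin 3 → ℝ) :
    dot5 (entV γ W) (src r W E B) = 0 := by
  simp only [dot5, entV, src, Matrix.cons_val_zero, Matrix.cons_val_one, Matrix.head_cons,
    Matrix.cons_val_two, Matrix.tail_cons, Matrix.cons_val_three, Matrix.cons_val_four]
  ring

lemma dot5_lin (v x y z : Fin 5 → ℝ) (c : ℝ) :
    dot5 v (-(c • (x - y)) + z) = -(c * (dot5 v x - dot5 v y)) + dot5 v z := by
  simp only [dot5, Pi.add_apply, Pi.neg_apply, Pi.smul_apply, Pi.sub_apply, smul_eq_mul]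
  ring

/-- Total entropy conservation for the semi-discrete scheme with the entropy
conservative flux on a periodic grid: `d/dt ∑_j 𝒰(W_j(t)) = 0`. -/
theorem semi_discrete_total_entropy_conservation
    (γ Δx r : ℝ) (N : ℕ) [NeZero N]
    (hγ : 1 < γ) (hΔx : 0 < Δx)
    (W : ZMod N → ℝ → Fin 5 → ℝ) (E B : ZMod N → ℝ → Fin 3 → ℝ)
    (hρ : ∀ j t, 0 < W j t 0) (hp : ∀ j t, 0 < W j t 4)
    (hu : ∀ j t, (W j t 1) ^ 2 + (W j t 2) ^ 2 + (W j t 3) ^ 2 < 1)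
    (hdiff : ∀ j, Differentiable ℝ (W j))
    (hscheme : ∀ j t,
      deriv (fun τ => Umap γ (W j τ)) t =
        -((1 / Δx) • (Ffl γ (W j t) (W (j + 1) t) - Ffl γ (W (j - 1) t) (W j t)))
          + src r (W j t) (E j t) (B j t)) :
    ∀ t, deriv (fun τ => ∑ j : ZMod N, entU γ (W j τ)) t = 0 := by
  intro t
  have hD : ∀ j : ZMod N, HasDerivAt (fun τ => entU γ (W j τ))
      (dot5 (entV γ (W j t)) (deriv (fun τ => Umap γ (W j τ)) t)) t := fun j =>
    entU_hasDerivAt γ hγ (W j) (hρ j) (hp j) (hu j) (hdiff j) t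
  have hsum : HasDerivAt (fun τ => ∑ j : ZMod N, entU γ (W j τ))
      (∑ j : ZMod N, dot5 (entV γ (W j t)) (deriv (fun τ => Umap γ (W j τ)) t)) t :=
    HasDerivAt.fun_sum (fun j _ => hD j)
  rw [hsum.deriv]
  have hterm : ∀ j : ZMod N, dot5 (entV γ (W j t)) (deriv (fun τ => Umap γ (W j τ)) t)
      = -(1 / Δx * (dot5 (entV γ (W j t)) (Ffl γ (W j t) (W (j + 1) t))
          - dot5 (entV γ (W j t)) (Ffl γ (W (j - 1) t) (W j t)))) := by
    intro j
    rw [hscheme j t, dot5_lin, dot5_src, add_zero]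
  rw [Finset.sum_congr rfl (fun j _ => hterm j)]
  have hH : ∑ j : ZMod N, dot5 (entV γ (W (j + 1) t)) (Ffl γ (W j t) (W (j + 1) t))
      = ∑ j : ZMod N, dot5 (entV γ (W j t)) (Ffl γ (W (j - 1) t) (W j t)) := by
    apply Fintype.sum_equiv (Equiv.addRight (1 : ZMod N))
    intro x
    simp [Equiv.coe_addRight, add_sub_cancel_right]
  have hψ : ∑ j : ZMod N, psiX (W (j + 1) t) = ∑ j : ZMod N, psiX (W j t) := by
    apply Fintype.sum_equiv (Equiv.addRight (1 : ZMod N))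
    intro x
    simp [Equiv.coe_addRight]
  have hflux : ∑ j : ZMod N, (dot5 (entV γ (W j t)) (Ffl γ (W j t) (W (j + 1) t))
      - dot5 (entV γ (W j t)) (Ffl γ (W (j - 1) t) (W j t))) = 0 := by
    rw [Finset.sum_sub_distrib, ← hH, ← Finset.sum_sub_distrib]
    have : ∀ j : ZMod N, dot5 (entV γ (W j t)) (Ffl γ (W j t) (W (j + 1) t))
        - dot5 (entV γ (W (j + 1) t)) (Ffl γ (W j t) (W (j + 1) t))
        = psiX (W j t) - psiX (W (j + 1) t) := by
      intro j
      have := flux_ec γ hγ (W j t) (W (j + 1) t) (hρ j t) (hp j t) (hu j t)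
        (hρ (j + 1) t) (hp (j + 1) t) (hu (j + 1) t)
      linarith
    rw [Finset.sum_congr rfl (fun j _ => this j), Finset.sum_sub_distrib, hψ, sub_self]
  calc ∑ j : ZMod N, -(1 / Δx * (dot5 (entV γ (W j t)) (Ffl γ (W j t) (W (j + 1) t))
          - dot5 (entV γ (W j t)) (Ffl γ (W (j - 1) t) (W j t))))
      = -(1 / Δx * ∑ j : ZMod N, (dot5 (entV γ (W j t)) (Ffl γ (W j t) (W (j + 1) t))
          - dot5 (entV γ (W j t)) (Ffl γ (W (j - 1) t) (W j t)))) := by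
        rw [Finset.mul_sum, ← Finset.sum_neg_distrib]
    _ = 0 := by rw [hflux]; simp
end
end
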